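/- Assume Condition 1 (spiked covariance structure): λ_1 ≥ ... ≥ λ_k > λ_{k+1} = λ_{k+2} = ... = λ_p. Then the rotated discriminant direction satisfies ||U^T β||_0 ≤ k + 1, i.e., U^T β has at most k+1 nonzero coordinates. (Theorem 1) -/
import Mathlib

open Matrix

/-- Theorem 1: under the spiked covariance structure, the rotated discriminant
direction `Uᵀ β` has at most `k + 1` nonzero coordinates. -/
theorem spiked_rotation_sparsity
    {p k : ℕ} (hk : 1 ≤ k) (hkp : k < p)
    (S : Matrix (Fin p) (Fin p) ℝ) (hS : S.IsSymm)
    (lam : Fin p → ℝ) (xi : Fin p → (Fin p → ℝ))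
    (hpos : ∀ j, 0 < lam j)
    (hdesc : ∀ i j : Fin p, i ≤ j → lam j ≤ lam i)
    (horth : ∀ i j : Fin p, xi i ⬝ᵥ xi j = if i = j then (1 : ℝ) else 0)
    (heig : ∀ j, S.mulVec (xi j) = lam j • xi j)
    (δ : Fin p → ℝ) (ρ : ℝ) (hρ : 0 < ρ)
    (U : Matrix (Fin p) (Fin p) ℝ) (hU : Uᵀ * U = 1)
    (η : Fin p → ℝ) (hηdesc : ∀ i j : Fin p, i ≤ j → η j ≤ η i)
    (hdiag : Uᵀ * (S + ρ • vecMulVec δ δ) * U = Matrix.diagonal η)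
    -- Condition 1 (spiked covariance structure)
    (hgap : lam ⟨k, hkp⟩ < lam ⟨k - 1, by omega⟩)
    (hflat : ∀ j : Fin p, k ≤ (j : ℕ) → lam j = lam ⟨k, hkp⟩) :
    (Finset.univ.filter fun i => (Uᵀ).mulVec (S⁻¹.mulVec δ) i ≠ 0).card ≤ k + 1 := by
  classical
  set l0 : ℝ := lam ⟨k, hkp⟩ with hl0def
  have hl0pos : 0 < l0 := hpos _
  have hlamge : ∀ j : Fin p, l0 ≤ lam j := by
    intro j
    rcases lt_or_ge (j : ℕ) k with h | h
    · exact hdesc j ⟨k, hkp⟩ (by simpa [Fin.le_def] using le_of_lt h)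
    · exact le_of_eq (hflat j h).symm
  set X : Matrix (Fin p) (Fin p) ℝ := Matrix.of xi with hXdef
  have hXXt : X * Xᵀ = 1 := by
    ext i j
    simpa [hXdef, Matrix.mul_apply, Matrix.one_apply, dotProduct] using horth i j
  have hXtX : Xᵀ * X = 1 := mul_eq_one_comm.mp hXXt
  have hcolorth : ∀ m r : Fin p, (∑ j, xi j m * xi j r) = if m = r then (1:ℝ) else 0 := by
    intro m r
    have h := Matrix.ext_iff.mpr hXtX m r
    simpa [hXdef, Matrix.mul_apply, Matrix.one_apply] using h
  have hdots : ∀ (v : Fin p → ℝ) (f : Fin p → (Fin p → ℝ)),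
      v ⬝ᵥ (∑ j, f j) = ∑ j, v ⬝ᵥ f j := by
    intro v f
    simp only [dotProduct, Finset.sum_apply, Finset.mul_sum]
    exact Finset.sum_comm
  -- expansion in the eigenbasis
  have hexpand : ∀ u : Fin p → ℝ, u = ∑ j, (xi j ⬝ᵥ u) • xi j := by
    intro u
    funext r
    have h1 : (∑ j, (xi j ⬝ᵥ u) • xi j) r = ∑ j, ∑ m, xi j m * u m * xi j r := by
      simp [Finset.sum_apply, dotProduct, Finset.sum_mul]
    rw [h1, Finset.sum_comm]
    have h2 : ∀ m : Fin p, ∑ j, xi j m * u m * xi j r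
        = (if m = r then (1:ℝ) else 0) * u m := by
      intro m
      rw [← hcolorth m r, Finset.sum_mul]
      exact Finset.sum_congr rfl fun j _ => by ring
    rw [Finset.sum_congr rfl fun m _ => h2 m]
    simp
  have hSsum : ∀ u : Fin p → ℝ, S.mulVec u = ∑ j, ((xi j ⬝ᵥ u) * lam j) • xi j := by
    intro u
    have h1 : S.mulVec u = S.mulVecLin (∑ j, (xi j ⬝ᵥ u) • xi j) := by
      rw [← hexpand u]; rfl
    rw [h1, map_sum]
    refine Finset.sum_congr rfl fun j _ => ?_
    rw [_root_.map_smul]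
    have h3 : S.mulVecLin (xi j) = lam j • xi j := heig j
    rw [h3, smul_smul]
  -- invertibility of S
  have hSX : S * Xᵀ = Xᵀ * Matrix.diagonal lam := by
    ext r j
    have h := congrFun (heig j) r
    simp only [Matrix.mulVec, dotProduct, Pi.smul_apply, smul_eq_mul] at h
    simp only [Matrix.mul_apply]
    calc ∑ m, S r m * Xᵀ m j = ∑ m, S r m * xi j m := rfl
    _ = lam j * xi j r := h
    _ = ∑ m, Xᵀ r m * Matrix.diagonal lam m j := by
        simp [hXdef, Matrix.diagonal, Finset.sum_ite_eq, mul_comm]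
  have hdetXXt : X.det * Xᵀ.det = 1 := by
    rw [← Matrix.det_mul, hXXt, Matrix.det_one]
  have hdetXt : Xᵀ.det ≠ 0 := by
    intro h0; rw [h0, mul_zero] at hdetXXt; exact one_ne_zero hdetXXt.symm
  have hdetS : S.det = ∏ j, lam j := by
    have h := congrArg Matrix.det hSX
    rw [Matrix.det_mul, Matrix.det_mul, Matrix.det_diagonal] at h
    have h' : S.det * Xᵀ.det = (∏ j, lam j) * Xᵀ.det := by rw [h]; ring
    exact mul_right_cancel₀ hdetXt h'
  have hdetU : IsUnit S.det := by
    rw [hdetS]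
    exact (Finset.prod_pos fun j _ => hpos j).ne'.isUnit
  have hinvS : S⁻¹ * S = 1 := Matrix.nonsing_inv_mul S hdetU
  have hSinvSymm : S⁻¹ᵀ = S⁻¹ := by
    rw [Matrix.transpose_nonsing_inv, hS.eq]
  have hUUt : U * Uᵀ = 1 := mul_eq_one_comm.mp hU
  set T : Matrix (Fin p) (Fin p) ℝ := S + ρ • vecMulVec δ δ with hTdef
  have hTU : T * U = U * Matrix.diagonal η := by
    have h2 : U * (Uᵀ * T * U) = U * Matrix.diagonal η := by rw [hdiag]
    calc T * U = (U * Uᵀ) * T * U := by rw [hUUt, Matrix.one_mul]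
    _ = U * (Uᵀ * T * U) := by simp only [Matrix.mul_assoc]
    _ = U * Matrix.diagonal η := h2
  have hTcol : ∀ i : Fin p, T.mulVec (fun r => U r i) = η i • (fun r => U r i) := by
    intro i; funext r
    have h := Matrix.ext_iff.mpr hTU r i
    simp only [Matrix.mul_apply] at h
    simp only [Matrix.mulVec, dotProduct, Pi.smul_apply, smul_eq_mul]
    rw [show (∑ m, T r m * U m i) = ∑ m, T r m * U m i from rfl, h]
    simp [Matrix.diagonal, Finset.sum_ite_eq, mul_comm]
  have hvmv : ∀ u : Fin p → ℝ, (vecMulVec δ δ).mulVec u = (δ ⬝ᵥ u) • δ := by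
    intro u; funext r
    simp only [Matrix.mulVec, dotProduct, Matrix.vecMulVec_apply, Pi.smul_apply, smul_eq_mul]
    rw [Finset.sum_mul]
    exact Finset.sum_congr rfl fun m _ => by ring
  have hTmul : ∀ u : Fin p → ℝ, T.mulVec u = S.mulVec u + (ρ * (δ ⬝ᵥ u)) • δ := by
    intro u
    rw [hTdef, Matrix.add_mulVec, Matrix.smul_mulVec, hvmv, smul_smul]
  -- key vanishing claim: if η i equals the flat eigenvalue, coordinate i vanishes
  have hw : ∀ i : Fin p, η i = l0 → (Uᵀ).mulVec (S⁻¹.mulVec δ) i = 0 := by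
    intro i hi
    set u : Fin p → ℝ := fun r => U r i with hu
    have h0 : S.mulVec u + (ρ * (δ ⬝ᵥ u)) • δ = l0 • u := by
      rw [← hTmul u, hTcol i, hi]
    have hdotSu : u ⬝ᵥ S.mulVec u = ∑ j, lam j * (xi j ⬝ᵥ u)^2 := by
      rw [hSsum u, hdots]
      refine Finset.sum_congr rfl fun j _ => ?_
      rw [dotProduct_smul, smul_eq_mul, dotProduct_comm]
      ring
    have hdotuu : u ⬝ᵥ u = ∑ j, (xi j ⬝ᵥ u)^2 := by
      conv_lhs => rw [show u ⬝ᵥ u = u ⬝ᵥ (∑ j, (xi j ⬝ᵥ u) • xi j) by rw [← hexpand u]]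
      rw [hdots]
      refine Finset.sum_congr rfl fun j _ => ?_
      rw [dotProduct_smul, smul_eq_mul, dotProduct_comm]
      ring
    have hsplit : ∑ j, (lam j - l0) * (xi j ⬝ᵥ u)^2
        = (∑ j, lam j * (xi j ⬝ᵥ u)^2) - l0 * ∑ j, (xi j ⬝ᵥ u)^2 := by
      rw [Finset.mul_sum, ← Finset.sum_sub_distrib]
      exact Finset.sum_congr rfl fun j _ => by ring
    have hquad : (∑ j, (lam j - l0) * (xi j ⬝ᵥ u)^2) + ρ * (δ ⬝ᵥ u)^2 = 0 := by
      have h1 := congrArg (fun v => u ⬝ᵥ v) h0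
      simp only [dotProduct_add, dotProduct_smul, smul_eq_mul] at h1
      rw [hdotSu, dotProduct_comm u δ] at h1
      rw [hsplit]
      rw [hdotuu] at h1
      nlinarith [h1]
    have hsumnn : ∀ j : Fin p, j ∈ Finset.univ → 0 ≤ (lam j - l0) * (xi j ⬝ᵥ u)^2 :=
      fun j _ => mul_nonneg (by linarith [hlamge j]) (sq_nonneg _)
    have hsnn : 0 ≤ ∑ j, (lam j - l0) * (xi j ⬝ᵥ u)^2 := Finset.sum_nonneg hsumnn
    have hρnn : 0 ≤ ρ * (δ ⬝ᵥ u)^2 := mul_nonneg hρ.le (sq_nonneg _)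
    have hsum0 : (∑ j, (lam j - l0) * (xi j ⬝ᵥ u)^2) = 0 := by linarith
    have hρ0 : ρ * (δ ⬝ᵥ u)^2 = 0 := by linarith
    have hδu : δ ⬝ᵥ u = 0 := by
      rcases mul_eq_zero.mp hρ0 with h | h
      · exact absurd h hρ.ne'
      · exact sq_eq_zero_iff.mp h
    have hterm0 : ∀ j : Fin p, (lam j - l0) * (xi j ⬝ᵥ u)^2 = 0 := fun j =>
      (Finset.sum_eq_zero_iff_of_nonneg hsumnn).mp hsum0 j (Finset.mem_univ j)
    have hSu : S.mulVec u = l0 • u := by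
      rw [hSsum u]
      conv_rhs => rw [hexpand u, Finset.smul_sum]
      refine Finset.sum_congr rfl fun j _ => ?_
      rw [smul_smul]
      rcases mul_eq_zero.mp (hterm0 j) with h | h
      · have hl : lam j = l0 := by linarith
        rw [hl, mul_comm]
      · rw [sq_eq_zero_iff.mp h, zero_mul, mul_zero]
    have hSinvu : S⁻¹.mulVec u = l0⁻¹ • u := by
      have h1 : u = S⁻¹.mulVec (S.mulVec u) := by
        rw [Matrix.mulVec_mulVec, hinvS, Matrix.one_mulVec]
      rw [hSu, Matrix.mulVec_smul] at h1
      have h2 := congrArg (fun v : Fin p → ℝ => l0⁻¹ • v) h1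
      simpa [smul_smul, inv_mul_cancel₀ hl0pos.ne'] using h2.symm
    have hcoord : (Uᵀ).mulVec (S⁻¹.mulVec δ) i = u ⬝ᵥ (S⁻¹.mulVec δ) := by
      simp only [Matrix.mulVec, dotProduct, Matrix.transpose_apply, hu]
    rw [hcoord, dotProduct_mulVec]
    have hvm : u ᵥ* S⁻¹ = l0⁻¹ • u := by
      rw [← hSinvSymm, Matrix.vecMul_transpose, hSinvu]
    rw [hvm, smul_dotProduct, dotProduct_comm, hδu]
    simp
  -- counting via linear independence
  set A := (Finset.univ.filter fun i => (Uᵀ).mulVec (S⁻¹.mulVec δ) i ≠ 0) with hAdef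
  have hAne : ∀ i ∈ A, η i ≠ l0 := by
    intro i hi h
    exact (Finset.mem_filter.mp hi).2 (hw i h)
  set g : Fin (k+1) → (Fin p → ℝ) :=
    fun j => if h : (j : ℕ) < k then xi ⟨j, h.trans hkp⟩ else δ with hgdef
  set W : Submodule ℝ (Fin p → ℝ) := Submodule.span ℝ (Set.range g) with hWdef
  set f : Fin p → (Fin p → ℝ) := fun i => (η i - l0) • (fun r => U r i) with hfdef
  have hfW : ∀ i, f i ∈ W := by
    intro i
    set u : Fin p → ℝ := fun r => U r i with hu
    have h3 : S.mulVec u - l0 • u = ∑ j, ((xi j ⬝ᵥ u) * (lam j - l0)) • xi j := by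
      rw [hSsum u,
        show l0 • u = l0 • ∑ j, (xi j ⬝ᵥ u) • xi j from by rw [← hexpand u],
        Finset.smul_sum, ← Finset.sum_sub_distrib]
      refine Finset.sum_congr rfl fun j _ => ?_
      rw [smul_smul, ← sub_smul]
      congr 1
      ring
    have hfT : f i = (∑ j, ((xi j ⬝ᵥ u) * (lam j - l0)) • xi j) + (ρ * (δ ⬝ᵥ u)) • δ := by
      have h4 : f i = T.mulVec u - l0 • u := by
        rw [hTcol i]
        show (η i - l0) • u = η i • u - l0 • u
        rw [sub_smul]
      rw [h4, hTmul u, ← h3]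
      abel
    rw [hfT]
    refine Submodule.add_mem _ (Submodule.sum_mem _ fun j _ => ?_)
      (Submodule.smul_mem _ _ (Submodule.subset_span ⟨⟨k, Nat.lt_succ_self k⟩, ?_⟩))
    · rcases lt_or_ge (j : ℕ) k with hj | hj
      · refine Submodule.smul_mem _ _ (Submodule.subset_span ⟨⟨(j : ℕ), by omega⟩, ?_⟩)
        simp only [hgdef]
        rw [dif_pos hj]
      · have : lam j - l0 = 0 := by rw [hflat j hj]; ring
        rw [this, mul_zero, zero_smul]
        exact Submodule.zero_mem _
    · simp only [hgdef]
      rw [dif_neg (by simp)]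
  have hUcol : ∀ i : Fin p, (Uᵀ).mulVec (fun r => U r i)
      = fun r => if r = i then (1:ℝ) else 0 := by
    intro i; funext r
    have h := Matrix.ext_iff.mpr hU r i
    simpa [Matrix.mul_apply, Matrix.mulVec, dotProduct, Matrix.one_apply,
      Matrix.transpose_apply] using h
  have hli : LinearIndependent ℝ (fun i : {x // x ∈ A} => f i.1) := by
    apply LinearIndependent.of_comp (Matrix.mulVecLin Uᵀ)
    rw [Fintype.linearIndependent_iff]
    intro gc hsum i0
    have hcompi : ∀ i : {x // x ∈ A}, (Matrix.mulVecLin Uᵀ) (f i.1)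
        = (η i.1 - l0) • (fun r => if r = i.1 then (1:ℝ) else 0) := by
      intro i
      rw [hfdef]
      simp only []
      rw [_root_.map_smul]
      congr 1
      exact hUcol i.1
    have h := congrFun hsum i0.1
    simp only [Function.comp] at h
    rw [Finset.sum_apply] at h
    have hterm : ∀ i : {x // x ∈ A}, i ∈ Finset.univ → i ≠ i0 →
        (gc i • (Matrix.mulVecLin Uᵀ) (f i.1)) i0.1 = 0 := by
      intro i _ hne
      rw [hcompi i]
      have : i0.1 ≠ i.1 := fun hh => hne (Subtype.ext hh.symm)
      simp [Pi.smul_apply, this]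
    rw [Finset.sum_eq_single i0 hterm (fun h0 => absurd (Finset.mem_univ i0) h0)] at h
    rw [hcompi i0] at h
    simp only [Pi.smul_apply, smul_eq_mul, eq_self_iff_true, if_true, mul_one,
      Pi.zero_apply] at h
    have hne : η i0.1 - l0 ≠ 0 := sub_ne_zero.mpr (hAne i0.1 i0.2)
    rcases mul_eq_zero.mp h with h1 | h1
    · exact h1
    · exact absurd h1 hne
  have hli' : LinearIndependent ℝ (fun i : {x // x ∈ A} => (⟨f i.1, hfW i.1⟩ : W)) := by
    apply LinearIndependent.of_comp W.subtype
    exact hli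
  have hcard : Fintype.card {x // x ∈ A} ≤ Module.finrank ℝ W :=
    hli'.fintype_card_le_finrank
  have hfin : Module.finrank ℝ W ≤ k + 1 := by
    rw [hWdef]
    refine (finrank_span_le_card _).trans ?_
    have h1 : (Set.range g).toFinset.card = Fintype.card (Set.range g) :=
      Set.toFinset_card _
    rw [h1]
    calc Fintype.card (Set.range g) ≤ Fintype.card (Fin (k+1)) := Fintype.card_range_le g
    _ = k + 1 := Fintype.card_fin _
  calc A.card = Fintype.card {x // x ∈ A} := (Fintype.card_coe A).symm
  _ ≤ Module.finrank ℝ W := hcard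
  _ ≤ k + 1 := hfin
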